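/- Let a,b>0, p>6, λ>0, h≥0 a potential, and let u∈ℋ_λ additionally satisfy ∑_x|u(x)|^p|log(u(x)²)|<∞. Then for all s,t>0: (J′_λ(su⁺+tu⁻),su⁺)=(J′_λ(su⁺),su⁺)−(a/2)st·K_V(u)+(b/2)s²t²K_V(u)²+b‖∇(su⁺)‖₂²‖∇(tu⁻)‖₂²−(b/2)st·K_V(u)·(‖∇(su⁺)‖₂²+‖∇(tu⁻)‖₂²)−b·st·K_V(u)·‖∇(su⁺)‖₂², where ‖∇v‖₂²=∑_x|∇v|²(x). -/
import Mathlib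


open scoped BigOperators
open Filter

namespace DiscreteKirchhoff

/-- Vertices of the lattice graph ℤ³. -/
abbrev V := Fin 3 → ℤ

/-- Adjacency on ℤ³: x ∼ y iff ∑ᵢ |xᵢ - yᵢ| = 1. -/
def adj (x y : V) : Prop := (∑ i, |x i - y i|) = 1

instance (x y : V) : Decidable (adj x y) :=
  inferInstanceAs (Decidable ((∑ i, |x i - y i|) = 1))

/-- Graph Laplacian: Δu(x) = ∑_{y∼x} (u(y) - u(x)). -/
noncomputable def lap (u : V → ℝ) (x : V) : ℝ :=
  ∑' y : V, if adj x y then u y - u x else 0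

/-- Gradient form: ∇u∇v(x) = (1/2) ∑_{y∼x} (u(y)-u(x))(v(y)-v(x)). -/
noncomputable def gradForm (u v : V → ℝ) (x : V) : ℝ :=
  (1/2) * ∑' y : V, if adj x y then (u y - u x) * (v y - v x) else 0

/-- |∇u|²(x). -/
noncomputable def gradSq (u : V → ℝ) (x : V) : ℝ := gradForm u u x

/-- Positive part u⁺ = max(u,0). -/
noncomputable def pos (u : V → ℝ) : V → ℝ := fun x => max (u x) 0

/-- Negative part u⁻ = min(u,0). -/
noncomputable def neg (u : V → ℝ) : V → ℝ := fun x => min (u x) 0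

/-- K_V(u) = ∑_x ∑_{y∼x} [u⁺(x)u⁻(y) + u⁻(x)u⁺(y)]. -/
noncomputable def KV (u : V → ℝ) : ℝ :=
  ∑' x : V, ∑' y : V, if adj x y then pos u x * neg u y + neg u x * pos u y else 0

/-- |t|^p log t², taken to be 0 at t = 0. -/
noncomputable def logTerm (p t : ℝ) : ℝ :=
  if t = 0 then 0 else |t| ^ p * Real.log (t ^ 2)

/-- |t|^{p-2} t log t², taken to be 0 at t = 0. -/
noncomputable def nlTerm (p t : ℝ) : ℝ :=
  if t = 0 then 0 else |t| ^ (p - 2) * t * Real.log (t ^ 2)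

/-- Membership in the space ℋ_λ (independent of λ > 0). -/
def memH (h u : V → ℝ) : Prop :=
  Summable (fun x => gradSq u x + (u x) ^ 2) ∧ Summable (fun x => h x * (u x) ^ 2)

/-- h_λ(x) = λ h(x) + 1. -/
noncomputable def hl (lam : ℝ) (h : V → ℝ) (x : V) : ℝ := lam * h x + 1

/-- Squared norm in ℋ_λ. -/
noncomputable def normHlamSq (a lam : ℝ) (h u : V → ℝ) : ℝ :=
  ∑' x : V, (a * gradSq u x + hl lam h x * (u x) ^ 2)

/-- Squared H¹ norm. -/
noncomputable def normH1Sq (u : V → ℝ) : ℝ :=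
  ∑' x : V, (gradSq u x + (u x) ^ 2)

/-- Inner product in ℋ_λ. -/
noncomputable def innerHlam (a lam : ℝ) (h u v : V → ℝ) : ℝ :=
  ∑' x : V, (a * gradForm u v x + hl lam h x * u x * v x)

/-- The energy functional J_λ. -/
noncomputable def Jlam (a b p lam : ℝ) (h u : V → ℝ) : ℝ :=
  (1/2) * normHlamSq a lam h u
  + (b/4) * (∑' x : V, gradSq u x) ^ 2
  + (2/p^2) * ∑' x : V, |u x| ^ p
  - (1/p) * ∑' x : V, logTerm p (u x)

/-- The pairing (J′_λ(u), φ). -/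
noncomputable def Jp (a b p lam : ℝ) (h u φ : V → ℝ) : ℝ :=
  (∑' x : V, (a * gradForm u φ x + hl lam h x * u x * φ x))
  + b * (∑' x : V, gradSq u x) * (∑' x : V, gradForm u φ x)
  - ∑' x : V, nlTerm p (u x) * φ x

/-- The Nehari manifold N_λ. -/
def NSet (a b p lam : ℝ) (h : V → ℝ) : Set (V → ℝ) :=
  {u | memH h u ∧ u ≠ 0 ∧ Jp a b p lam h u u = 0}

/-- The sign-changing Nehari set M_λ. -/
def MSet (a b p lam : ℝ) (h : V → ℝ) : Set (V → ℝ) :=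
  {u | memH h u ∧ pos u ≠ 0 ∧ neg u ≠ 0 ∧
       Jp a b p lam h u (pos u) = 0 ∧ Jp a b p lam h u (neg u) = 0}

/-- c_λ = inf_{N_λ} J_λ. -/
noncomputable def cLam (a b p lam : ℝ) (h : V → ℝ) : ℝ :=
  sInf (Jlam a b p lam h '' NSet a b p lam h)

/-- m_λ = inf_{M_λ} J_λ. -/
noncomputable def mLam (a b p lam : ℝ) (h : V → ℝ) : ℝ :=
  sInf (Jlam a b p lam h '' MSet a b p lam h)

/-- Graph-connectedness of a subset of ℤ³. -/
def connectedIn (S : Set V) : Prop :=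
  ∀ x ∈ S, ∀ y ∈ S, Relation.ReflTransGen (fun z w => adj z w ∧ w ∈ S) x y

/-- Hypothesis (h₁): h ≥ 0 and Ω = {h = 0} is nonempty, connected and finite. -/
def hypH1 (h : V → ℝ) : Prop :=
  (∀ x, 0 ≤ h x) ∧ {x | h x = 0}.Nonempty ∧ connectedIn {x | h x = 0} ∧ {x | h x = 0}.Finite

/-- Hypothesis (h₂): the sublevel set {h < M} is finite for some M > 0. -/
def hypH2 (h : V → ℝ) : Prop :=
  ∃ M > 0, {x | h x < M}.Finite

/-- u solves the discrete logarithmic Kirchhoff equation pointwise on ℤ³. -/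
def solvesEq (a b p lam : ℝ) (h u : V → ℝ) : Prop :=
  ∀ x : V, -(a + b * ∑' y : V, gradSq u y) * lap u x + hl lam h x * u x = nlTerm p (u x)

/-- Vertex boundary of a subset of ℤ³. -/
def bdry (S : Set V) : Set V := {y | y ∉ S ∧ ∃ x ∈ S, adj x y}

/-- ℋ¹₀(Ω): functions vanishing outside Ω. -/
def H10 (S : Set V) : Set (V → ℝ) := {u | ∀ x, x ∉ S → u x = 0}

/-- The energy functional J_Ω. -/
noncomputable def JOm (a b p : ℝ) (S : Set V) (u : V → ℝ) : ℝ :=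
  (1/2) * ∑' x : V, (S ∪ bdry S).indicator (fun x => a * gradSq u x) x
  + (1/2) * ∑' x : V, S.indicator (fun x => (u x) ^ 2) x
  + (b/4) * (∑' x : V, (S ∪ bdry S).indicator (gradSq u) x) ^ 2
  + (2/p^2) * ∑' x : V, S.indicator (fun x => |u x| ^ p) x
  - (1/p) * ∑' x : V, S.indicator (fun x => logTerm p (u x)) x

/-- The pairing (J′_Ω(u), φ). -/
noncomputable def JOmp (a b p : ℝ) (S : Set V) (u φ : V → ℝ) : ℝ :=
  (∑' x : V, (S ∪ bdry S).indicator (fun x => a * gradForm u φ x) x)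
  + (∑' x : V, S.indicator (fun x => u x * φ x) x)
  + b * (∑' x : V, (S ∪ bdry S).indicator (gradSq u) x)
      * (∑' x : V, (S ∪ bdry S).indicator (gradForm u φ) x)
  - ∑' x : V, S.indicator (fun x => nlTerm p (u x) * φ x) x

/-- The Nehari manifold N_Ω. -/
def NOm (a b p : ℝ) (S : Set V) : Set (V → ℝ) :=
  {u | u ∈ H10 S ∧ u ≠ 0 ∧ JOmp a b p S u u = 0}

/-- The sign-changing Nehari set M_Ω. -/
def MOm (a b p : ℝ) (S : Set V) : Set (V → ℝ) :=
  {u | u ∈ H10 S ∧ pos u ≠ 0 ∧ neg u ≠ 0 ∧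
       JOmp a b p S u (pos u) = 0 ∧ JOmp a b p S u (neg u) = 0}

/-- c_Ω. -/
noncomputable def cOm (a b p : ℝ) (S : Set V) : ℝ :=
  sInf (JOm a b p S '' NOm a b p S)

/-- m_Ω. -/
noncomputable def mOm (a b p : ℝ) (S : Set V) : ℝ :=
  sInf (JOm a b p S '' MOm a b p S)

/-- u solves the limiting equation pointwise on Ω. -/
def solvesEqOm (a b p : ℝ) (S : Set V) (u : V → ℝ) : Prop :=
  ∀ x ∈ S, -(a + b * ∑' y : V, (S ∪ bdry S).indicator (gradSq u) y) * lap u x + u x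
      = nlTerm p (u x)


/-- Finite set containing all neighbours of `x`. -/
def nbrs (x : V) : Finset V := Fintype.piFinset (fun i => {x i - 1, x i, x i + 1})

lemma adj_mem_nbrs {x y : V} (h : adj x y) : y ∈ nbrs x := by
  rw [nbrs, Fintype.mem_piFinset]
  intro i
  have h1 : |x i - y i| ≤ 1 := by
    have h2 := Finset.single_le_sum (f := fun j => |x j - y j|)
      (fun j _ => abs_nonneg _) (Finset.mem_univ i)
    rw [adj] at h
    omega
  have h3 : -1 ≤ x i - y i ∧ x i - y i ≤ 1 := abs_le.mp h1
  simp only [Finset.mem_insert, Finset.mem_singleton]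
  omega

lemma inner_eq (x : V) (f : V → ℝ) :
    (∑' y : V, if adj x y then f y else 0) = ∑ y ∈ nbrs x, if adj x y then f y else 0 :=
  tsum_eq_sum (fun y hy => by rw [if_neg (fun hc => hy (adj_mem_nbrs hc))])

lemma gradForm_eq_sum (u v : V → ℝ) (x : V) :
    gradForm u v x
      = (1/2) * ∑ y ∈ nbrs x, if adj x y then (u y - u x) * (v y - v x) else 0 := by
  rw [gradForm, inner_eq x (fun y => (u y - u x) * (v y - v x))]

lemma gradForm_comm (u v : V → ℝ) (x : V) : gradForm u v x = gradForm v u x := by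
  rw [gradForm_eq_sum, gradForm_eq_sum]
  congr 1
  refine Finset.sum_congr rfl fun y _ => ?_
  split_ifs <;> ring

lemma gradForm_add_left (f g w : V → ℝ) (x : V) :
    gradForm (fun y => f y + g y) w x = gradForm f w x + gradForm g w x := by
  simp only [gradForm_eq_sum]
  have hsum : (∑ y ∈ nbrs x, if adj x y then ((fun y => f y + g y) y - (fun y => f y + g y) x) * (w y - w x) else 0)
      = (∑ y ∈ nbrs x, if adj x y then (f y - f x) * (w y - w x) else 0)
        + (∑ y ∈ nbrs x, if adj x y then (g y - g x) * (w y - w x) else 0) := by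
    rw [← Finset.sum_add_distrib]
    refine Finset.sum_congr rfl fun y _ => ?_
    split_ifs <;> ring
  linear_combination (1/2 : ℝ) * hsum

lemma gradForm_smul (c d : ℝ) (f g : V → ℝ) (x : V) :
    gradForm (fun y => c * f y) (fun y => d * g y) x = (c * d) * gradForm f g x := by
  simp only [gradForm_eq_sum]
  have hsum : (∑ y ∈ nbrs x, if adj x y then ((fun y => c * f y) y - (fun y => c * f y) x) * ((fun y => d * g y) y - (fun y => d * g y) x) else 0)
      = (c * d) * ∑ y ∈ nbrs x, if adj x y then (f y - f x) * (g y - g x) else 0 := by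
    rw [Finset.mul_sum]
    refine Finset.sum_congr rfl fun y _ => ?_
    split_ifs <;> ring
  linear_combination (1/2 : ℝ) * hsum

lemma gradSq_add (f g : V → ℝ) (x : V) :
    gradSq (fun y => f y + g y) x
      = gradSq f x + 2 * gradForm f g x + gradSq g x := by
  simp only [gradSq, gradForm_eq_sum]
  have hsum : (∑ y ∈ nbrs x, if adj x y then ((fun y => f y + g y) y - (fun y => f y + g y) x) * ((fun y => f y + g y) y - (fun y => f y + g y) x) else 0)
      = (∑ y ∈ nbrs x, if adj x y then (f y - f x) * (f y - f x) else 0)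
        + 2 * (∑ y ∈ nbrs x, if adj x y then (f y - f x) * (g y - g x) else 0)
        + (∑ y ∈ nbrs x, if adj x y then (g y - g x) * (g y - g x) else 0) := by
    rw [Finset.mul_sum, ← Finset.sum_add_distrib, ← Finset.sum_add_distrib]
    refine Finset.sum_congr rfl fun y _ => ?_
    split_ifs <;> ring
  linear_combination (1/2 : ℝ) * hsum

lemma pos_mul_neg (u : V → ℝ) (z : V) : pos u z * neg u z = 0 := by
  rw [pos, neg]
  rcases le_total (u z) 0 with hz | hz
  · rw [max_eq_right hz, zero_mul]
  · rw [min_eq_right hz, mul_zero]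

lemma gradForm_pos_neg (u : V → ℝ) (x : V) :
    gradForm (pos u) (neg u) x
      = -((1/2) * ∑' y : V, if adj x y then pos u x * neg u y + neg u x * pos u y else 0) := by
  rw [gradForm_eq_sum, inner_eq x (fun y => pos u x * neg u y + neg u x * pos u y)]
  have hsum : (∑ y ∈ nbrs x, ((if adj x y then (pos u y - pos u x) * (neg u y - neg u x) else 0)
        + (if adj x y then pos u x * neg u y + neg u x * pos u y else 0))) = 0 := by
    refine Finset.sum_eq_zero fun y _ => ?_
    split_ifs with hc
    · have h1 := pos_mul_neg u x
      have h2 := pos_mul_neg u y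
      linear_combination h1 + h2
    · simp
  rw [Finset.sum_add_distrib] at hsum
  linear_combination (1/2 : ℝ) * hsum
lemma lip_pos (a b : ℝ) : |max a 0 - max b 0| ≤ |a - b| := abs_max_sub_max_le_abs a b 0

lemma lip_neg (a b : ℝ) : |min a 0 - min b 0| ≤ |a - b| := by
  have h := abs_min_sub_min_le_max a 0 b 0
  simpa using h

lemma gradSq_nonneg (u : V → ℝ) (x : V) : 0 ≤ gradSq u x := by
  rw [gradSq, gradForm_eq_sum]
  refine mul_nonneg (by norm_num) (Finset.sum_nonneg fun y _ => ?_)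
  split_ifs
  · exact mul_self_nonneg _
  · exact le_refl 0

lemma gradSq_pos_le (u : V → ℝ) (x : V) : gradSq (pos u) x ≤ gradSq u x := by
  simp only [gradSq, gradForm_eq_sum]
  gcongr with y hy
  split_ifs
  · have hl := lip_pos (u y) (u x)
    calc (pos u y - pos u x) * (pos u y - pos u x)
        = |pos u y - pos u x| * |pos u y - pos u x| := (abs_mul_abs_self _).symm
      _ ≤ |u y - u x| * |u y - u x| :=
          mul_le_mul hl hl (abs_nonneg _) (abs_nonneg _)
      _ = (u y - u x) * (u y - u x) := abs_mul_abs_self _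
  · exact le_refl 0

lemma gradSq_neg_le (u : V → ℝ) (x : V) : gradSq (neg u) x ≤ gradSq u x := by
  simp only [gradSq, gradForm_eq_sum]
  gcongr with y hy
  split_ifs
  · have hl := lip_neg (u y) (u x)
    calc (neg u y - neg u x) * (neg u y - neg u x)
        = |neg u y - neg u x| * |neg u y - neg u x| := (abs_mul_abs_self _).symm
      _ ≤ |u y - u x| * |u y - u x| :=
          mul_le_mul hl hl (abs_nonneg _) (abs_nonneg _)
      _ = (u y - u x) * (u y - u x) := abs_mul_abs_self _
  · exact le_refl 0

lemma abs_gradForm_pos_neg_le (u : V → ℝ) (x : V) :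
    |gradForm (pos u) (neg u) x| ≤ gradSq u x := by
  rw [gradForm_eq_sum, gradSq, gradForm_eq_sum]
  rw [abs_mul, abs_of_nonneg (by norm_num : (0:ℝ) ≤ 1/2)]
  gcongr
  calc |∑ y ∈ nbrs x, if adj x y then (pos u y - pos u x) * (neg u y - neg u x) else 0|
      ≤ ∑ y ∈ nbrs x, |if adj x y then (pos u y - pos u x) * (neg u y - neg u x) else 0| :=
        Finset.abs_sum_le_sum_abs _ _
    _ ≤ ∑ y ∈ nbrs x, if adj x y then (u y - u x) * (u y - u x) else 0 := by
        refine Finset.sum_le_sum fun y _ => ?_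
        split_ifs
        · rw [abs_mul]
          calc |pos u y - pos u x| * |neg u y - neg u x|
              ≤ |u y - u x| * |u y - u x| :=
                mul_le_mul (lip_pos _ _) (lip_neg _ _) (abs_nonneg _) (abs_nonneg _)
            _ = (u y - u x) * (u y - u x) := abs_mul_abs_self _
        · simp
lemma summable_gradSq {h u : V → ℝ} (hu : memH h u) : Summable (gradSq u) :=
  Summable.of_nonneg_of_le (fun x => gradSq_nonneg u x)
    (fun x => le_add_of_nonneg_right (sq_nonneg _)) hu.1

lemma summable_sq {h u : V → ℝ} (hu : memH h u) : Summable (fun x => (u x) ^ 2) :=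
  Summable.of_nonneg_of_le (fun x => sq_nonneg _)
    (fun x => le_add_of_nonneg_left (gradSq_nonneg u x)) hu.1

lemma summable_gradSq_pos {h u : V → ℝ} (hu : memH h u) : Summable (gradSq (pos u)) :=
  Summable.of_nonneg_of_le (fun x => gradSq_nonneg _ x)
    (fun x => gradSq_pos_le u x) (summable_gradSq hu)

lemma summable_gradSq_neg {h u : V → ℝ} (hu : memH h u) : Summable (gradSq (neg u)) :=
  Summable.of_nonneg_of_le (fun x => gradSq_nonneg _ x)
    (fun x => gradSq_neg_le u x) (summable_gradSq hu)

lemma summable_gradForm_pos_neg {h u : V → ℝ} (hu : memH h u) :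
    Summable (fun x => gradForm (pos u) (neg u) x) := by
  refine Summable.of_abs ?_
  exact Summable.of_nonneg_of_le (fun x => abs_nonneg _)
    (fun x => abs_gradForm_pos_neg_le u x) (summable_gradSq hu)

/-- The tsum-level key identity: ∑ₓ ∇u⁺∇u⁻(x) = -(1/2)·K_V(u). -/
lemma tsum_gradForm_pos_neg (u : V → ℝ) :
    ∑' x : V, gradForm (pos u) (neg u) x = -(1/2) * KV u := by
  rw [KV, ← tsum_mul_left]
  refine tsum_congr fun x => ?_
  rw [gradForm_pos_neg]
  ring
/-- decomposition of the pairing (J′_λ(su⁺+tu⁻), su⁺). -/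
theorem stmt6 (a b p lam : ℝ) (ha : 0 < a) (hb : 0 < b) (hp : 6 < p) (hlam : 0 < lam)
    (h : V → ℝ) (hh : ∀ x, 0 ≤ h x) (u : V → ℝ) (hu : memH h u)
    (hlog : Summable (fun x =>
      if u x = 0 then 0 else |u x| ^ p * |Real.log ((u x) ^ 2)|))
    (s t : ℝ) (hs : 0 < s) (ht : 0 < t) :
    Jp a b p lam h (fun x => s * pos u x + t * neg u x) (fun x => s * pos u x)
      = Jp a b p lam h (fun x => s * pos u x) (fun x => s * pos u x)
        - (a/2) * (s*t) * KV u
        + (b/2) * s^2 * t^2 * (KV u)^2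
        + b * (∑' x : V, gradSq (fun y => s * pos u y) x)
            * (∑' x : V, gradSq (fun y => t * neg u y) x)
        - (b/2) * (s*t) * KV u
            * ((∑' x : V, gradSq (fun y => s * pos u y) x)
               + (∑' x : V, gradSq (fun y => t * neg u y) x))
        - b * (s*t) * KV u * (∑' x : V, gradSq (fun y => s * pos u y) x) := by
  -- Summability facts
  have hSP : Summable (fun x => gradForm (fun y => s * pos u y) (fun y => s * pos u y) x) := by
    have e : ∀ x, gradForm (fun y => s * pos u y) (fun y => s * pos u y) x
        = (s * s) * gradSq (pos u) x := fun x => gradForm_smul s s (pos u) (pos u) x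
    exact (summable_congr e).mpr ((summable_gradSq_pos hu).mul_left (s * s))
  have hSN : Summable (fun x => gradForm (fun y => t * neg u y) (fun y => t * neg u y) x) := by
    have e : ∀ x, gradForm (fun y => t * neg u y) (fun y => t * neg u y) x
        = (t * t) * gradSq (neg u) x := fun x => gradForm_smul t t (neg u) (neg u) x
    exact (summable_congr e).mpr ((summable_gradSq_neg hu).mul_left (t * t))
  have hSF : Summable (fun x => gradForm (fun y => s * pos u y) (fun y => t * neg u y) x) := by
    have e : ∀ x, gradForm (fun y => s * pos u y) (fun y => t * neg u y) x
        = (s * t) * gradForm (pos u) (neg u) x := fun x => gradForm_smul s t (pos u) (neg u) x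
    exact (summable_congr e).mpr ((summable_gradForm_pos_neg hu).mul_left (s * t))
  have hSH : Summable (fun x => hl lam h x * (s * pos u x) * (s * pos u x)) := by
    refine Summable.of_nonneg_of_le (fun x => ?_) (fun x => ?_)
      (((hu.2.mul_left lam).add (summable_sq hu)).mul_left (s ^ 2))
    · have h1 : 0 ≤ hl lam h x := by
        rw [hl]; have := mul_nonneg hlam.le (hh x); linarith
      have h2 : 0 ≤ s * pos u x := mul_nonneg hs.le (le_max_right _ _)
      exact mul_nonneg (mul_nonneg h1 h2) h2
    · have h1 : 0 ≤ lam * h x := mul_nonneg hlam.le (hh x)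
      have h2 : pos u x * pos u x ≤ u x * u x := by
        calc pos u x * pos u x = |pos u x| * |pos u x| := (abs_mul_abs_self _).symm
          _ ≤ |u x| * |u x| := by
              have : |pos u x| ≤ |u x| := by
                have := lip_pos (u x) 0
                simpa [pos] using this
              exact mul_le_mul this this (abs_nonneg _) (abs_nonneg _)
          _ = u x * u x := abs_mul_abs_self _
      rw [hl]
      nlinarith [mul_nonneg (mul_nonneg (sq_nonneg s) h1) (sub_nonneg.mpr h2),
        mul_nonneg (sq_nonneg s) (sub_nonneg.mpr h2)]
  have hS1 : Summable (fun x => a * gradForm (fun y => s * pos u y) (fun y => s * pos u y) x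
      + hl lam h x * (s * pos u x) * (s * pos u x)) := (hSP.mul_left a).add hSH
  -- Value of the cross term
  have hFk : (∑' x : V, gradForm (fun y => s * pos u y) (fun y => t * neg u y) x)
      = -((s * t) / 2) * KV u := by
    calc (∑' x : V, gradForm (fun y => s * pos u y) (fun y => t * neg u y) x)
        = ∑' x : V, (s * t) * gradForm (pos u) (neg u) x :=
          tsum_congr fun x => gradForm_smul s t (pos u) (neg u) x
      _ = (s * t) * ∑' x : V, gradForm (pos u) (neg u) x := tsum_mul_left
      _ = -((s * t) / 2) * KV u := by rw [tsum_gradForm_pos_neg]; ring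
  -- the three tsum decompositions
  have e1 : (∑' x : V, (a * gradForm (fun x => s * pos u x + t * neg u x) (fun x => s * pos u x) x
        + hl lam h x * (s * pos u x + t * neg u x) * (s * pos u x)))
      = (∑' x : V, (a * gradForm (fun x => s * pos u x) (fun x => s * pos u x) x
          + hl lam h x * (s * pos u x) * (s * pos u x)))
        + a * (∑' x : V, gradForm (fun y => s * pos u y) (fun y => t * neg u y) x) := by
    rw [← tsum_mul_left, ← Summable.tsum_add hS1 (hSF.mul_left a)]
    refine tsum_congr fun x => ?_
    have h1 : gradForm (fun x => s * pos u x + t * neg u x) (fun x => s * pos u x) x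
        = gradForm (fun y => s * pos u y) (fun y => s * pos u y) x
          + gradForm (fun y => t * neg u y) (fun y => s * pos u y) x :=
      gradForm_add_left (fun y => s * pos u y) (fun y => t * neg u y) (fun y => s * pos u y) x
    have h2 : gradForm (fun y => t * neg u y) (fun y => s * pos u y) x
        = gradForm (fun y => s * pos u y) (fun y => t * neg u y) x := gradForm_comm _ _ x
    have h3 := pos_mul_neg u x
    rw [h1, h2]
    linear_combination (hl lam h x * s * t) * h3
  have e2 : (∑' x : V, gradSq (fun x => s * pos u x + t * neg u x) x)
      = (∑' x : V, gradForm (fun y => s * pos u y) (fun y => s * pos u y) x)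
        + (2 * (∑' x : V, gradForm (fun y => s * pos u y) (fun y => t * neg u y) x)
           + (∑' x : V, gradForm (fun y => t * neg u y) (fun y => t * neg u y) x)) := by
    rw [← tsum_mul_left, ← Summable.tsum_add (hSF.mul_left 2) hSN, ← Summable.tsum_add hSP ((hSF.mul_left 2).add hSN)]
    refine tsum_congr fun x => ?_
    have h1 : gradSq (fun x => s * pos u x + t * neg u x) x
        = gradSq (fun y => s * pos u y) x
          + 2 * gradForm (fun y => s * pos u y) (fun y => t * neg u y) x
          + gradSq (fun y => t * neg u y) x :=
      gradSq_add (fun y => s * pos u y) (fun y => t * neg u y) x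
    rw [h1]; simp only [gradSq]; ring
  have e3 : (∑' x : V, gradForm (fun x => s * pos u x + t * neg u x) (fun x => s * pos u x) x)
      = (∑' x : V, gradForm (fun y => s * pos u y) (fun y => s * pos u y) x)
        + (∑' x : V, gradForm (fun y => s * pos u y) (fun y => t * neg u y) x) := by
    rw [← Summable.tsum_add hSP hSF]
    refine tsum_congr fun x => ?_
    have h1 : gradForm (fun x => s * pos u x + t * neg u x) (fun x => s * pos u x) x
        = gradForm (fun y => s * pos u y) (fun y => s * pos u y) x
          + gradForm (fun y => t * neg u y) (fun y => s * pos u y) x :=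
      gradForm_add_left (fun y => s * pos u y) (fun y => t * neg u y) (fun y => s * pos u y) x
    have h2 : gradForm (fun y => t * neg u y) (fun y => s * pos u y) x
        = gradForm (fun y => s * pos u y) (fun y => t * neg u y) x := gradForm_comm _ _ x
    rw [h1, h2]
  have e4 : (∑' x : V, nlTerm p (s * pos u x + t * neg u x) * (s * pos u x))
      = ∑' x : V, nlTerm p (s * pos u x) * (s * pos u x) := by
    refine tsum_congr fun x => ?_
    rcases le_or_gt (u x) 0 with hx | hx
    · have h0 : pos u x = 0 := max_eq_right hx
      simp [h0]
    · have h0 : neg u x = 0 := min_eq_right hx.le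
      simp [h0]
  simp only [Jp, gradSq] at *
  rw [e1, e2, e3, e4, hFk]
  ring
end DiscreteKirchhoff
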